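/- Let q ≥ 3 be an integer, η > 0, S ≥ 1, and let (x_t), (y_t) be positive sequences with x_{t+1} ≥ x_t + η C x_t^{q−1} and y_{t+1} ≤ y_t + η S C y_t^{q−1} for all t, where C > 0 is a constant. If x_0 ≥ y_0 · S^{1/(q−2)} · (1 + δ) for some δ > 0, then for every t, y_t ≤ x_t · (y_0 S^{1/(q-2)} / x_0) — i.e., the ratio y_t/x_t never exceeds its initial value scaled by S^{1/(q-2)}; in particular y_t < x_t for all t. -/
import Mathlib


theorem lottery_sequence_comparison (q : ℕ) (hq : 3 ≤ q) (η S C δ : ℝ)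
    (hη : 0 < η) (hS : 1 ≤ S) (hC : 0 < C) (hδ : 0 < δ)
    (x y : ℕ → ℝ) (hx : ∀ t, 0 < x t) (hy : ∀ t, 0 < y t)
    (hxg : ∀ t, x t + η * C * x t ^ (q - 1) ≤ x (t + 1))
    (hyg : ∀ t, y (t + 1) ≤ y t + η * S * C * y t ^ (q - 1))
    (hinit : y 0 * S ^ ((1 : ℝ) / ((q : ℝ) - 2)) * (1 + δ) ≤ x 0) :
    ∀ t, y t ≤ x t * (y 0 * S ^ ((1 : ℝ) / ((q : ℝ) - 2)) / x 0) ∧ y t < x t := by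
  have hS0 : (0 : ℝ) < S := lt_of_lt_of_le one_pos hS
  set A : ℝ := S ^ ((1 : ℝ) / ((q : ℝ) - 2)) with hAdef
  have hq3 : (3 : ℝ) ≤ (q : ℝ) := by exact_mod_cast hq
  have hq2pos : (0 : ℝ) < (q : ℝ) - 2 := by linarith
  have hA1 : 1 ≤ A := Real.one_le_rpow hS (by positivity)
  have hA0 : 0 < A := lt_of_lt_of_le one_pos hA1
  -- A ^ (q - 2) = S
  have hcast : ((q - 2 : ℕ) : ℝ) = (q : ℝ) - 2 := by
    have : (2 : ℕ) ≤ q := by omega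
    push_cast [Nat.cast_sub this]; ring
  have hApow : A ^ (q - 2) = S := by
    rw [hAdef, ← Real.rpow_natCast (S ^ ((1 : ℝ) / ((q : ℝ) - 2))) (q - 2),
      ← Real.rpow_mul hS0.le, hcast]
    rw [one_div, inv_mul_cancel₀ (ne_of_gt hq2pos), Real.rpow_one]
  have hApow' : A ^ (q - 1) = S * A := by
    have hq1 : q - 1 = (q - 2) + 1 := by omega
    rw [hq1, pow_succ, hApow]
  set ρ : ℝ := y 0 * A / x 0 with hρdef
  have hρ0 : 0 < ρ := by
    apply div_pos (mul_pos (hy 0) hA0) (hx 0)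
  have hρ1 : ρ < 1 := by
    rw [hρdef, div_lt_one (hx 0)]
    nlinarith [mul_pos (hy 0) hA0]
  -- main invariant
  have key : ∀ t, y t * A ≤ x t * ρ := by
    intro t
    induction t with
    | zero =>
      rw [hρdef, mul_div_assoc', mul_comm (x 0), mul_div_assoc,
        div_self (ne_of_gt (hx 0)), mul_one]
    | succ t ih =>
      have hyA : 0 < y t * A := mul_pos (hy t) hA0
      have hxρ : 0 < x t * ρ := mul_pos (hx t) hρ0
      have h1 : y (t + 1) * A ≤ y t * A + η * C * (y t * A) ^ (q - 1) := by
        have hyexp : (y t * A) ^ (q - 1) = y t ^ (q - 1) * (S * A) := by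
          rw [mul_pow, hApow']
        calc y (t + 1) * A ≤ (y t + η * S * C * y t ^ (q - 1)) * A :=
              mul_le_mul_of_nonneg_right (hyg t) hA0.le
          _ = y t * A + η * C * (y t ^ (q - 1) * (S * A)) := by ring
          _ = y t * A + η * C * (y t * A) ^ (q - 1) := by rw [hyexp]
      have h2 : (y t * A) ^ (q - 1) ≤ (x t * ρ) ^ (q - 1) :=
        pow_le_pow_left₀ hyA.le ih _
      have h3 : (x t * ρ) ^ (q - 1) ≤ x t ^ (q - 1) * ρ := by
        rw [mul_pow]
        have hρle : ρ ^ (q - 1) ≤ ρ := by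
          calc ρ ^ (q - 1) ≤ ρ ^ 1 :=
                pow_le_pow_of_le_one hρ0.le hρ1.le (by omega)
            _ = ρ := pow_one ρ
        exact mul_le_mul_of_nonneg_left hρle (pow_pos (hx t) _).le
      have h4 : y t * A + η * C * (y t * A) ^ (q - 1)
          ≤ x t * ρ + η * C * (x t ^ (q - 1) * ρ) := by
        have h23 := le_trans h2 h3
        have := mul_le_mul_of_nonneg_left h23 (le_of_lt (mul_pos hη hC))
        linarith
      have h5 : x t * ρ + η * C * (x t ^ (q - 1) * ρ)
          = (x t + η * C * x t ^ (q - 1)) * ρ := by ring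
      have h6 : (x t + η * C * x t ^ (q - 1)) * ρ ≤ x (t + 1) * ρ :=
        mul_le_mul_of_nonneg_right (hxg t) hρ0.le
      linarith
  intro t
  have h1 : y t ≤ y t * A := le_mul_of_one_le_right (hy t).le hA1
  have h2 : y t ≤ x t * ρ := le_trans h1 (key t)
  refine ⟨h2, ?_⟩
  calc y t ≤ x t * ρ := h2
    _ < x t * 1 := by exact mul_lt_mul_of_pos_left hρ1 (hx t)
    _ = x t := mul_one _
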